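/- For positive definite Hermitian n×n matrices A and B, tr(A⁻¹B) ≤ n · (det B / det A) · (tr(B⁻¹A))^{n-1}. -/

import Mathlib

/-!
Write `A = Sᴴ S` and put `M = S⁻¹ᴴ B S⁻¹`. Then `M` is positive definite, `tr (A⁻¹ B) = tr M`,
`tr (B⁻¹ A) = tr M⁻¹` and `det M = det B / det A`, so in terms of the eigenvalues `λᵢ > 0` of `M`
the claim reads `∑ λᵢ ≤ n (∏ λⱼ) (∑ λⱼ⁻¹)ⁿ⁻¹`. This holds term by term, since
`λᵢ = (∏ λⱼ) ∏_{j ≠ i} λⱼ⁻¹` and each of the `n - 1` factors `λⱼ⁻¹` is at most `∑ λⱼ⁻¹`.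
-/

open scoped ComplexOrder MatrixOrder
open Matrix Finset

theorem Finset.prod_erase_le_sum_pow {ι R : Type*} [Fintype ι] [DecidableEq ι] [CommSemiring R]
    [PartialOrder R] [IsOrderedRing R] {g : ι → R} (hg : ∀ i, 0 ≤ g i) (i : ι) :
    ∏ j ∈ univ.erase i, g j ≤ (∑ j, g j) ^ (Fintype.card ι - 1) := by
  calc ∏ j ∈ univ.erase i, g j ≤ ∏ _j ∈ univ.erase i, ∑ k, g k :=
        prod_le_prod (fun j _ ↦ hg j) fun j _ ↦ single_le_sum (fun k _ ↦ hg k) (mem_univ j)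
    _ = (∑ j, g j) ^ (Fintype.card ι - 1) := by
        rw [prod_const, card_erase_of_mem (mem_univ i), card_univ]

theorem Finset.sum_le_card_mul_prod_mul_sum_inv_pow {ι K : Type*} [Fintype ι] [Field K]
    [LinearOrder K] [IsStrictOrderedRing K] {f : ι → K} (hf : ∀ i, 0 < f i) :
    ∑ i, f i ≤ Fintype.card ι * (∏ i, f i) * (∑ i, (f i)⁻¹) ^ (Fintype.card ι - 1) := by
  classical
  have hle (i : ι) : f i ≤ (∏ j, f j) * (∑ j, (f j)⁻¹) ^ (Fintype.card ι - 1) := by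
    have hprod : f i = (∏ j, f j) * ∏ j ∈ univ.erase i, (f j)⁻¹ := by
      rw [prod_inv_distrib, ← mul_prod_erase _ f (mem_univ i), mul_assoc,
        mul_inv_cancel₀ (prod_ne_zero_iff.2 fun j _ ↦ (hf j).ne'), mul_one]
    rw [hprod]
    gcongr
    · exact prod_nonneg fun j _ ↦ (hf j).le
    · exact prod_erase_le_sum_pow (fun j ↦ (inv_pos.2 (hf j)).le) i
  calc ∑ i, f i ≤ ∑ _i : ι, (∏ j, f j) * (∑ j, (f j)⁻¹) ^ (Fintype.card ι - 1) :=
        sum_le_sum fun i _ ↦ hle i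
    _ = _ := by rw [sum_const, card_univ, nsmul_eq_mul, mul_assoc]

namespace Matrix

section Spectral

variable {𝕜 n : Type*} [RCLike 𝕜] [Fintype n] [DecidableEq n]

theorem IsHermitian.trace_cfc {A : Matrix n n 𝕜} (hA : A.IsHermitian) (f : ℝ → ℝ) :
    (cfc f A).trace = ∑ i, (f (hA.eigenvalues i) : 𝕜) := by
  rw [hA.cfc_eq, IsHermitian.cfc, Unitary.conjStarAlgAut_apply, trace_mul_cycle,
    mem_unitaryGroup_iff'.mp hA.eigenvectorUnitary.2, one_mul, trace_diagonal]
  rfl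

theorem PosDef.re_trace_inv {A : Matrix n n 𝕜} (hA : A.PosDef) :
    RCLike.re A⁻¹.trace = ∑ i, (hA.isHermitian.eigenvalues i)⁻¹ := by
  rw [nonsing_inv_eq_ringInverse,
    ← cfc_ringInverse_id (R := ℝ) A hA.isUnit hA.isHermitian.isSelfAdjoint,
    hA.isHermitian.trace_cfc]
  simp only [map_sum, RCLike.ofReal_re]

theorem PosDef.re_trace_le_card_mul_re_det_mul_re_trace_inv_pow {A : Matrix n n 𝕜}
    (hA : A.PosDef) :
    RCLike.re A.trace ≤
      Fintype.card n * RCLike.re A.det * (RCLike.re A⁻¹.trace) ^ (Fintype.card n - 1) := by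
  have htrace : RCLike.re A.trace = ∑ i, hA.isHermitian.eigenvalues i := by
    simp only [hA.isHermitian.trace_eq_sum_eigenvalues, map_sum, RCLike.ofReal_re]
  have hdet : RCLike.re A.det = ∏ i, hA.isHermitian.eigenvalues i := by
    rw [hA.isHermitian.det_eq_prod_eigenvalues, ← RCLike.ofReal_prod, RCLike.ofReal_re]
  rw [htrace, hdet, hA.re_trace_inv]
  exact sum_le_card_mul_prod_mul_sum_inv_pow hA.eigenvalues_pos

end Spectral

section Congruence

variable {α n : Type*} [Fintype n] [DecidableEq n]

theorem trace_inv_conjTranspose_mul_self_mul [CommRing α] [StarRing α] (S B : Matrix n n α) :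
    ((Sᴴ * S)⁻¹ * B).trace = (S⁻¹ᴴ * B * S⁻¹).trace := by
  rw [mul_inv_rev, ← conjTranspose_nonsing_inv, mul_assoc, trace_mul_comm, mul_assoc]

theorem trace_inv_mul_conjTranspose_mul_self [CommRing α] [StarRing α] {S : Matrix n n α}
    (hS : IsUnit S.det) (B : Matrix n n α) :
    (B⁻¹ * (Sᴴ * S)).trace = (S⁻¹ᴴ * B * S⁻¹)⁻¹.trace := by
  rw [mul_inv_rev, mul_inv_rev, ← conjTranspose_nonsing_inv, nonsing_inv_nonsing_inv _ hS,
    ← mul_assoc, trace_mul_cycle, mul_assoc]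

theorem det_conjTranspose_inv_mul_mul_inv [Field α] [StarRing α] (S B : Matrix n n α) :
    (S⁻¹ᴴ * B * S⁻¹).det = B.det / (Sᴴ * S).det := by
  simp only [det_mul, det_conjTranspose, det_nonsing_inv, Ring.inverse_eq_inv', star_inv₀]
  ring

end Congruence

end Matrix

/-- For positive definite Hermitian `n×n` matrices `A` and `B`,
`tr(A⁻¹B) ≤ n · (det B / det A) · (tr(B⁻¹A))^{n-1}`. -/
theorem trace_le_det_ratio_mul_trace_pow {n : ℕ} (A B : Matrix (Fin n) (Fin n) ℂ)
    (hA : A.PosDef) (hB : B.PosDef) :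
    ((A⁻¹ * B).trace).re ≤
      (n : ℝ) * (B.det.re / A.det.re) * (((B⁻¹ * A).trace).re) ^ (n - 1) := by
  obtain ⟨S, rfl⟩ := CStarAlgebra.nonneg_iff_eq_star_mul_self.mp hA.posSemidef.nonneg
  rw [star_eq_conjTranspose] at hA ⊢
  have hS : IsUnit S.det := by
    have hdet := hA.det_pos.ne'
    rw [det_mul] at hdet
    exact (right_ne_zero_of_mul hdet).isUnit
  have hM : (S⁻¹ᴴ * B * S⁻¹).PosDef :=
    (IsUnit.posDef_star_left_conjugate_iff
      (isUnit_nonsing_inv_iff.2 ((isUnit_iff_isUnit_det S).2 hS))).2 hB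
  obtain ⟨d, -, hd⟩ := RCLike.pos_iff_exists_ofReal.mp hA.det_pos
  have hM_bound := hM.re_trace_le_card_mul_re_det_mul_re_trace_inv_pow
  rw [← trace_inv_conjTranspose_mul_self_mul, ← trace_inv_mul_conjTranspose_mul_self hS,
    det_conjTranspose_inv_mul_mul_inv, ← hd, RCLike.div_re_ofReal, Fintype.card_fin] at hM_bound
  rw [← hd]
  simpa only [Complex.coe_algebraMap, Complex.ofReal_re, RCLike.re_to_complex] using hM_bound
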